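/- Let $R$ be a semiprime right Goldie ring contained as a subring in a semisimple Artinian ring $S$, and let $\mathcal{G}$ be a set of right ideals of $R$ such that: (a) for each $I \in \mathcal{G}$, the left annihilator of $I$ in $S$ is zero; (b) for each $x \in S$ there exists $I \in \mathcal{G}$ with $xI \subseteq R$. Then $S$ is a classical right quotient ring of $R$ and each $I \in \mathcal{G}$ contains a regular element of $R$. -/
import Mathlib


/-- The right annihilator of a subset `X` of a ring. -/
def rAnnSet (R : Type*) [Ring R] (X : Set R) : Set R := {r | ∀ x ∈ X, x * r = 0}

/-- A ring satisfies the ascending chain condition on right annihilators. -/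
def ACCRightAnnihilators (R : Type*) [Ring R] : Prop :=
  ∀ f : ℕ → Set R, (∀ n, ∃ X, f n = rAnnSet R X) → Monotone f →
    ∃ N, ∀ n, N ≤ n → f n = f N

/-- A ring is semiprime: it has no nonzero nilpotent (two-sided) ideals; equivalently
`aRa = 0` implies `a = 0`. -/
def IsSemiprimeRing (R : Type*) [Ring R] : Prop :=
  ∀ a : R, (∀ r : R, a * r * a = 0) → a = 0

/-- A ring is right Goldie: it has finite right uniform dimension (no infinite
independent family of nonzero right ideals) and the ACC on right annihilators. -/
def IsRightGoldieRing (R : Type*) [Ring R] : Prop :=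
  (¬ ∃ g : ℕ → Submodule Rᵐᵒᵖ R, (∀ n, g n ≠ ⊥) ∧ iSupIndep g) ∧
    ACCRightAnnihilators R

/-- `Q` is a classical right quotient ring of `R` via the embedding `f`. -/
def IsClassicalRightQuotientRing (R Q : Type*) [Ring R] [Ring Q] (f : R →+* Q) : Prop :=
  Function.Injective f ∧ (∀ s : R, IsRegular s → IsUnit (f s)) ∧
    ∀ q : Q, ∃ a s : R, IsRegular s ∧ q * f s = f a

section Aux
variable {R : Type*} [Ring R]

/-- Existence of maximal elements among families of right annihilators. -/
lemma exists_maximal_rAnn (hacc : ACCRightAnnihilators R) (𝒜 : Set (Set R))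
    (h1 : ∀ A ∈ 𝒜, ∃ X, A = rAnnSet R X) (h2 : 𝒜.Nonempty) :
    ∃ A ∈ 𝒜, ∀ B ∈ 𝒜, A ⊆ B → A = B := by
  by_contra hmax
  push_neg at hmax
  obtain ⟨A0, hA0⟩ := h2
  choose F hF1 hF2 hF3 using hmax
  let g : ℕ → {A : Set R // A ∈ 𝒜} := fun n =>
    Nat.rec ⟨A0, hA0⟩ (fun _ p => ⟨F p.1 p.2, hF1 p.1 p.2⟩) n
  have hstep : ∀ n, (g n).1 ⊆ (g (n+1)).1 := fun n => hF2 (g n).1 (g n).2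
  have hne : ∀ n, (g n).1 ≠ (g (n+1)).1 := fun n => hF3 (g n).1 (g n).2
  have hmono : Monotone (fun n => (g n).1) := monotone_nat_of_le_succ hstep
  obtain ⟨N, hN⟩ := hacc (fun n => (g n).1) (fun n => h1 _ (g n).2) hmono
  exact hne N ((hN (N+1) (Nat.le_succ N)).symm ▸ rfl)

/-- Fitting-type lemma. -/
lemma fitting (hacc : ACCRightAnnihilators R) (x : R) :
    ∃ N : ℕ, 1 ≤ N ∧ ∀ z, x ^ (2*N) * z = 0 → x ^ N * z = 0 := by
  have hmono : Monotone (fun n => rAnnSet R {x ^ (n+1)}) := by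
    apply monotone_nat_of_le_succ
    intro n z hz
    intro y hy
    rcases hy with rfl
    have h1 : x ^ (n+1) * z = 0 := hz _ rfl
    rw [pow_succ' x (n+1), mul_assoc, h1, mul_zero]
  obtain ⟨N, hN⟩ := hacc (fun n => rAnnSet R {x ^ (n+1)}) (fun n => ⟨{x ^ (n+1)}, rfl⟩) hmono
  refine ⟨N + 1, Nat.le_add_left 1 N, fun z hz => ?_⟩
  have h1 : z ∈ rAnnSet R {x ^ ((2*N+1)+1)} := by
    intro y hy; rcases hy with rfl
    have : 2*(N+1) = (2*N+1)+1 := by ring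
    rwa [this] at hz
  rw [hN (2*N+1) (by omega)] at h1
  have h2 : z ∈ rAnnSet R {x ^ (N+1)} := by
    rw [hN N le_rfl]; rwa [hN N le_rfl] at h1
  exact h2 _ rfl

lemma pow_mul_shift (u y : R) : ∀ k : ℕ, (u*y)^(k+1) = u * (y*u)^k * y := by
  intro k
  induction k with
  | zero => simp
  | succ k ih =>
      calc (u*y)^(k+1+1) = (u*y)^(k+1) * (u*y) := by rw [pow_succ]
        _ = ((u * (y*u)^k) * y) * (u*y) := by rw [ih]
        _ = (u * (y*u)^k) * (y * (u*y)) := by rw [mul_assoc]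
        _ = (u * (y*u)^k) * ((y*u)*y) := by rw [← mul_assoc y u y]
        _ = ((u * (y*u)^k) * (y*u)) * y := by rw [← mul_assoc]
        _ = (u * ((y*u)^k * (y*u))) * y := by rw [mul_assoc u]
        _ = u * (y*u)^(k+1) * y := by rw [← pow_succ]


/-- In a semiprime ring with ACC on right annihilators, every nonzero right ideal
contains an element all of whose powers are nonzero. -/
lemma exists_nonnilpotent (hsp : IsSemiprimeRing R) (hacc : ACCRightAnnihilators R)
    (J : Submodule Rᵐᵒᵖ R) (y : R) (hyJ : y ∈ J) (hy : y ≠ 0) :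
    ∃ x ∈ J, ∀ n : ℕ, x ^ (n+1) ≠ 0 := by
  classical
  by_contra hcon
  push_neg at hcon
  -- every element of the left ideal R*y is nilpotent
  have hnil : ∀ u : R, ∃ m : ℕ, (u * y) ^ (m+1) = 0 := by
    intro u
    have hyu : y * u ∈ J := by
      have := J.smul_mem (MulOpposite.op u) hyJ
      rwa [MulOpposite.smul_eq_mul_unop, MulOpposite.unop_op] at this
    obtain ⟨n, hn⟩ := hcon _ hyu
    exact ⟨n + 1, by rw [pow_mul_shift, hn, mul_zero, zero_mul]⟩
  -- maximal right annihilator among nonzero elements of R*y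
  set Λ : Set R := {z | ∃ u, z = u * y} with hΛ
  set 𝒜 : Set (Set R) := {A | ∃ z, (z ∈ Λ ∧ z ≠ 0) ∧ A = rAnnSet R {z}} with h𝒜
  have hy' : y ∈ Λ := ⟨1, (one_mul y).symm⟩
  obtain ⟨A, hA, hAmax⟩ := exists_maximal_rAnn hacc 𝒜
    (fun A hA => by obtain ⟨z, _, rfl⟩ := hA; exact ⟨{z}, rfl⟩)
    ⟨rAnnSet R {y}, ⟨y, ⟨hy', hy⟩, rfl⟩⟩
  obtain ⟨y₀, ⟨⟨u₀, hu₀⟩, hy₀⟩, rfl⟩ := hA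
  obtain ⟨t, ht⟩ : ∃ t, y₀ * t * y₀ ≠ 0 := by
    by_contra hc; push_neg at hc; exact hy₀ (hsp y₀ hc)
  set u := t * y₀ with hu
  have hyu : y₀ * u ≠ 0 := by rwa [hu, ← mul_assoc]
  have hune : u ≠ 0 := fun h => hyu (by rw [h, mul_zero])
  obtain ⟨m₁, hm₁⟩ := hnil (t * u₀)
  have humul : u = (t * u₀) * y := by rw [hu, hu₀, mul_assoc]
  have hexnil : ∃ m, u ^ (m+1) = 0 := ⟨m₁, by rw [humul]; exact hm₁⟩
  set m := Nat.find hexnil with hm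
  have hm0 : u ^ (m+1) = 0 := Nat.find_spec hexnil
  have hmpos : 1 ≤ m := by
    rcases Nat.eq_zero_or_pos m with h | h
    · exfalso; apply hune; have := hm0; rwa [h, pow_one] at this
    · exact h
  set b := u ^ m with hb
  have hbne : b ≠ 0 := by
    have := Nat.find_min hexnil (m := m - 1) (by omega)
    rwa [hb, show m = (m-1)+1 by omega]
  -- b = v * y₀ for some v, and b ∈ Λ
  have hbv : b = (t * (y₀ * t)^(m-1)) * y₀ := by
    rw [hb, hu, show m = (m-1)+1 by omega, pow_mul_shift]
    simp
  have hbΛ : b ∈ Λ := ⟨t * (y₀ * t)^(m-1) * u₀, by rw [hbv, hu₀]; simp [mul_assoc]⟩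
  have hsub : rAnnSet R {y₀} ⊆ rAnnSet R {b} := by
    intro z hz w hw; rcases hw with rfl
    rw [hbv, mul_assoc, hz y₀ rfl, mul_zero]
  have heq : rAnnSet R {y₀} = rAnnSet R {b} :=
    hAmax _ ⟨b, ⟨hbΛ, hbne⟩, rfl⟩ hsub
  have hub : b * u = 0 := by rw [hb, ← pow_succ]; exact hm0
  have : u ∈ rAnnSet R {y₀} := by rw [heq]; intro w hw; rcases hw with rfl; exact hub
  exact hyu (this y₀ rfl)

/-- The peeling lemma. -/
lemma peel : ∀ (n : ℕ) (s : Finset ℕ), s.card = n → ∀ (A c : ℕ → R),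
    (∀ j ∈ s, ∀ i ∈ s, j < i → A j * A i = 0) →
    (∀ i ∈ s, ∀ z : R, A i * (A i * z) = 0 → A i * z = 0) →
    ∑ i ∈ s, A i * c i = 0 → ∀ i ∈ s, A i * c i = 0 := by
  intro n
  induction n with
  | zero =>
      intro s hcard A c _ _ _ i hi
      rw [Finset.card_eq_zero] at hcard
      exact absurd (hcard ▸ hi) (Finset.notMem_empty i)
  | succ n ih =>
      intro s hcard A c hpair hkey hsum i hi
      have hne : s.Nonempty := ⟨i, hi⟩
      set m := s.min' hne with hmdef
      have hmmem : m ∈ s := s.min'_mem hne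
      have h1 : ∀ j ∈ s.erase m, A m * (A j * c j) = 0 := by
        intro j hj
        have hjm : j ≠ m := Finset.ne_of_mem_erase hj
        have hjs : j ∈ s := Finset.mem_of_mem_erase hj
        have : m < j := lt_of_le_of_ne (s.min'_le j hjs) (Ne.symm hjm)
        rw [← mul_assoc, hpair m hmmem j hjs this, zero_mul]
      have hsplit : A m * c m + ∑ j ∈ s.erase m, A j * c j = 0 := by
        rw [Finset.add_sum_erase s (fun j => A j * c j) hmmem]; exact hsum
      have h2 : A m * (A m * c m) = 0 := by
        have h3 := congrArg (fun z => A m * z) hsplit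
        simp only [mul_add, mul_zero, Finset.mul_sum] at h3
        rwa [Finset.sum_eq_zero h1, add_zero] at h3
      have hm' : A m * c m = 0 := hkey m hmmem (c m) h2
      have hsum' : ∑ j ∈ s.erase m, A j * c j = 0 := by
        rwa [hm', zero_add] at hsplit
      by_cases him : i = m
      · rw [him]; exact hm'
      · exact ih (s.erase m)
          (by rw [Finset.card_erase_of_mem hmmem, hcard]; rfl) A c
          (fun j hj i' hi' h => hpair j (Finset.mem_of_mem_erase hj) i' (Finset.mem_of_mem_erase hi') h)
          (fun i' hi' => hkey i' (Finset.mem_of_mem_erase hi'))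
          hsum' i (Finset.mem_erase.mpr ⟨him, hi⟩)

end Aux

section SAux
variable {S : Type*} [Ring S] [IsSemisimpleRing S]

/-- Semisimple rings are von Neumann regular. -/
lemma exists_vnr (u : S) : ∃ v : S, u * v * u = u := by
  obtain ⟨L, hL⟩ := exists_isCompl (Submodule.span S {u})
  have h1 : (1 : S) ∈ Submodule.span S {u} ⊔ L := by
    rw [hL.sup_eq_top]; trivial
  obtain ⟨y, hy, l, hl, hyl⟩ := Submodule.mem_sup.mp h1
  obtain ⟨v, hv⟩ := Submodule.mem_span_singleton.mp hy
  refine ⟨v, ?_⟩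
  have hvy : v * u = y := by rw [← hv]; rfl
  have hul : u * l ∈ L := by
    have := L.smul_mem u hl; rwa [smul_eq_mul] at this
  have hthis : u * v * u + u * l = u := by
    have h2 : u * (y + l) = u := by rw [hyl, mul_one]
    rw [mul_add, ← hvy, ← mul_assoc] at h2
    exact h2
  have huldiff : u - u * v * u = u * l := sub_eq_of_eq_add' hthis.symm
  have hspan : u - u * v * u ∈ Submodule.span S {u} := by
    apply Submodule.sub_mem
    · exact Submodule.mem_span_singleton_self u
    · have := (Submodule.span S {u}).smul_mem (u * v) (Submodule.mem_span_singleton_self u)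
      rwa [smul_eq_mul] at this
  have hmem : u - u * v * u ∈ Submodule.span S {u} ⊓ L := ⟨hspan, huldiff ▸ hul⟩
  rw [hL.inf_eq_bot, Submodule.mem_bot] at hmem
  exact (sub_eq_zero.mp hmem).symm

/-- In a semisimple ring, an element with zero right annihilator is a unit. -/
lemma isUnit_of_rann_eq_bot (u : S) (h : ∀ z : S, u * z = 0 → z = 0) : IsUnit u := by
  obtain ⟨v, hv⟩ := exists_vnr u
  have h1 : u * (v * u - 1) = 0 := by
    rw [mul_sub, mul_one, ← mul_assoc, hv, sub_self]
  have hvu : v * u = 1 := by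
    have := h _ h1; rwa [sub_eq_zero] at this
  let φ : S →ₗ[S] S := LinearMap.toSpanSingleton S S u
  have hφ : ∀ z : S, φ z = z * u := fun z => by
    simp [φ, LinearMap.toSpanSingleton_apply, smul_eq_mul]
  have hsurj : Function.Surjective φ := by
    intro z
    refine ⟨z * v, ?_⟩
    rw [hφ, mul_assoc, hvu, mul_one]
  have hinj : Function.Injective φ :=
    IsNoetherian.injective_of_surjective_endomorphism φ hsurj
  have huv : u * v = 1 := by
    have h2 : φ (u * v - 1) = φ 0 := by
      rw [hφ, hφ, zero_mul, sub_mul, one_mul, hv, sub_self]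
    have := hinj h2
    rwa [sub_eq_zero] at this
  exact ⟨⟨u, v, huv, hvu⟩, rfl⟩

/-- If a subset of a semisimple ring has zero left annihilator, the right ideal it
generates contains `1`. -/
lemma one_mem_span_of_lann (T : Set S) (hT : ∀ x : S, (∀ a ∈ T, x * a = 0) → x = 0) :
    (1 : S) ∈ Submodule.span Sᵐᵒᵖ T := by
  classical
  have hMright : ∀ z ∈ Submodule.span Sᵐᵒᵖ T, ∀ s : S, z * s ∈ Submodule.span Sᵐᵒᵖ T := by
    intro z hz s
    have := (Submodule.span Sᵐᵒᵖ T).smul_mem (MulOpposite.op s) hz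
    rwa [MulOpposite.smul_eq_mul_unop, MulOpposite.unop_op] at this
  -- every b in the span is "dominated" by an idempotent in the span, jointly with any
  -- given idempotent
  have combine : ∀ e : S, e * e = e → e ∈ Submodule.span Sᵐᵒᵖ T →
      ∀ b ∈ Submodule.span Sᵐᵒᵖ T, ∃ h : S,
        (h * h = h ∧ h ∈ Submodule.span Sᵐᵒᵖ T) ∧ h * e = e ∧ h * b = b := by
    intro e hee heM b hbM
    obtain ⟨v, hv⟩ := exists_vnr b
    obtain ⟨eb, hebdef⟩ : ∃ eb : S, eb = b * v := ⟨_, rfl⟩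
    have hebM : eb ∈ Submodule.span Sᵐᵒᵖ T := hebdef ▸ hMright b hbM v
    have hebb : eb * b = b := by rw [hebdef]; exact hv
    obtain ⟨c, hcdef⟩ : ∃ c : S, c = eb - e * eb := ⟨_, rfl⟩
    obtain ⟨w, hw⟩ := exists_vnr c
    obtain ⟨g, hgdef⟩ : ∃ g : S, g = c * w := ⟨_, rfl⟩
    have hcM : c ∈ Submodule.span Sᵐᵒᵖ T := by
      rw [hcdef]
      exact Submodule.sub_mem _ hebM (hMright e heM eb)
    have hgM : g ∈ Submodule.span Sᵐᵒᵖ T := hgdef ▸ hMright c hcM w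
    have hec : e * c = 0 := by rw [hcdef, mul_sub, ← mul_assoc, hee, sub_self]
    have heg : e * g = 0 := by rw [hgdef, ← mul_assoc, hec, zero_mul]
    have hgg : g * g = g := by
      rw [hgdef, show c * w * (c * w) = (c * w * c) * w from by rw [mul_assoc (c*w) c w], hw]
    have hgc : g * c = c := by rw [hgdef]; exact hw
    -- orthogonalize:  k := g - g*e
    obtain ⟨k, hkdef⟩ : ∃ k : S, k = g - g * e := ⟨_, rfl⟩
    have hkM : k ∈ Submodule.span Sᵐᵒᵖ T := by
      rw [hkdef]; exact Submodule.sub_mem _ hgM (hMright g hgM e)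
    have hek : e * k = 0 := by
      rw [hkdef, mul_sub, heg, ← mul_assoc, heg, zero_mul, sub_self]
    have hke : k * e = 0 := by
      rw [hkdef, sub_mul, mul_assoc, hee, sub_self]
    have hkg : k * g = g := by
      rw [hkdef, sub_mul, hgg, mul_assoc, heg, mul_zero, sub_zero]
    have hkk : k * k = k := by
      rw [hkdef, mul_sub]
      rw [show (g - g*e) * (g * e) = ((g - g*e) * g) * e from by rw [mul_assoc]]
      rw [← hkdef, hkg]
      exact hkdef.symm
    refine ⟨e + k, ⟨?_, Submodule.add_mem _ heM hkM⟩, ?_, ?_⟩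
    · rw [add_mul, mul_add, mul_add, hee, hek, hke, hkk, add_zero, zero_add]
    · rw [add_mul, hee, hke, add_zero]
    · -- h * b = b
      have hkc : k * c = c := by
        rw [show k * c = k * (g * c) from by rw [hgc], ← mul_assoc, hkg, hgc]
      have hhc : (e + k) * c = c := by rw [add_mul, hec, hkc, zero_add]
      have hheeb : (e + k) * (e * eb) = e * eb := by
        rw [← mul_assoc, add_mul, hee, hke, add_zero]
      have hheb : (e + k) * eb = eb := by
        have hsplit : eb = e * eb + c := by rw [hcdef]; abel
        calc (e + k) * eb = (e + k) * (e * eb) + (e + k) * c := by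
              rw [← mul_add, ← hsplit]
          _ = e * eb + c := by rw [hheeb, hhc]
          _ = eb := hsplit.symm
      calc (e + k) * b = (e + k) * (eb * b) := by rw [hebb]
        _ = ((e + k) * eb) * b := by rw [mul_assoc]
        _ = eb * b := by rw [hheb]
        _ = b := hebb
  -- pick an idempotent in the span with minimal left annihilator
  obtain ⟨L0, hL0mem, hmin⟩ := (wellFounded_lt (α := Submodule S S)).has_min
    ((fun e => LinearMap.ker (LinearMap.toSpanSingleton S S e)) ''
      {e | e * e = e ∧ e ∈ Submodule.span Sᵐᵒᵖ T})
    ⟨_, Set.mem_image_of_mem _ (⟨by rw [mul_zero], Submodule.zero_mem _⟩ :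
      (0:S) ∈ {e | e * e = e ∧ e ∈ Submodule.span Sᵐᵒᵖ T})⟩
  obtain ⟨e0, he0, rfl⟩ := hL0mem
  have hLmem : ∀ e x : S, x ∈ LinearMap.ker (LinearMap.toSpanSingleton S S e) ↔ x * e = 0 := by
    intro e x; simp [LinearMap.mem_ker, LinearMap.toSpanSingleton_apply, smul_eq_mul]
  have key : ∀ b ∈ Submodule.span Sᵐᵒᵖ T, e0 * b = b := by
    intro b hbM
    obtain ⟨h, ⟨hhh, hhM⟩, hhe0, hhb⟩ := combine e0 he0.1 he0.2 b hbM
    have hle : LinearMap.ker (LinearMap.toSpanSingleton S S h) ≤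
        LinearMap.ker (LinearMap.toSpanSingleton S S e0) := by
      intro z hz
      rw [hLmem] at hz ⊢
      rw [← hhe0, ← mul_assoc, hz, zero_mul]
    have heq : LinearMap.ker (LinearMap.toSpanSingleton S S h) =
        LinearMap.ker (LinearMap.toSpanSingleton S S e0) := by
      by_contra hne
      exact hmin _ (Set.mem_image_of_mem _ ⟨hhh, hhM⟩) (lt_of_le_of_ne hle hne)
    have h1e : (1 - e0) * e0 = 0 := by rw [sub_mul, one_mul, he0.1, sub_self]
    have h1h : (1 - e0) * h = 0 := by
      have := (hLmem e0 (1 - e0)).mpr h1e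
      rw [← heq, hLmem] at this
      exact this
    have he0h : e0 * h = h := by
      have h2 : h - e0 * h = 0 := by rw [← h1h]; rw [sub_mul, one_mul]
      exact (sub_eq_zero.mp h2).symm
    calc e0 * b = e0 * (h * b) := by rw [hhb]
      _ = (e0 * h) * b := by rw [mul_assoc]
      _ = h * b := by rw [he0h]
      _ = b := hhb
  have he1 : e0 = 1 := by
    have h0 : ∀ a ∈ T, (1 - e0) * a = 0 := by
      intro a haT
      rw [sub_mul, one_mul, key a (Submodule.subset_span haT), sub_self]
    have h1 := hT _ h0
    have h2 := sub_eq_zero.mp h1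
    exact h2.symm
  rw [← he1]; exact he0.2

end SAux

section Construction
variable {R : Type*} [Ring R]

/-- Invariant for the Goldie construction: `A 0, ..., A (n-1)` are nonzero elements of `I`
with `r(aᵢ) = r(aᵢ²)` and `aⱼ * aᵢ = 0` for `j < i`. -/
def GoodSeq (I : Submodule Rᵐᵒᵖ R) (A : ℕ → R) (n : ℕ) : Prop :=
  ∀ i, i < n → ((A i ∈ I ∧ A i ≠ 0 ∧ ∀ z : R, A i * (A i * z) = 0 → A i * z = 0)
    ∧ ∀ j, j < i → A j * A i = 0)

lemma goodSeq_update {I : Submodule Rᵐᵒᵖ R} {A : ℕ → R} {n : ℕ} (hG : GoodSeq I A n)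
    {a : R} (haI : a ∈ I) (hane : a ≠ 0)
    (hak : ∀ z : R, a * (a * z) = 0 → a * z = 0)
    (hann : ∀ j, j < n → A j * a = 0) :
    GoodSeq I (Function.update A n a) (n + 1) := by
  classical
  intro i hi
  rcases Nat.lt_succ_iff_lt_or_eq.mp hi with h | h
  · have hne : i ≠ n := by omega
    rw [Function.update_of_ne hne]
    refine ⟨(hG i h).1, fun j hj => ?_⟩
    rw [Function.update_of_ne (by omega : j ≠ n)]
    exact (hG i h).2 j hj
  · subst h
    rw [Function.update_self]
    refine ⟨⟨haI, hane, hak⟩, fun j hj => ?_⟩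
    rw [Function.update_of_ne (by omega : j ≠ i)]
    exact hann j hj

/-- The key construction: an essential right ideal in a semiprime right Goldie ring
contains an element with zero right annihilator. -/
lemma exists_right_regular_of_essential
    (hsp : IsSemiprimeRing R) (hacc : ACCRightAnnihilators R)
    (hdim : ¬ ∃ g : ℕ → Submodule Rᵐᵒᵖ R, (∀ n, g n ≠ ⊥) ∧ iSupIndep g)
    (I : Submodule Rᵐᵒᵖ R)
    (hess : ∀ t : R, t ≠ 0 → ∃ r : R, t * r ∈ I ∧ t * r ≠ 0) :
    ∃ c ∈ I, ∀ z : R, c * z = 0 → z = 0 := by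
  classical
  by_contra hno
  push_neg at hno
  -- Step A : the intersection of the annihilators of a good sequence is never zero
  have hDne : ∀ (A : ℕ → R) (n : ℕ), GoodSeq I A n →
      ∃ x : R, (∀ j, j < n → A j * x = 0) ∧ x ≠ 0 := by
    intro A n hG
    by_contra h
    push_neg at h
    have hcI : (∑ i ∈ Finset.range n, A i) ∈ I :=
      Submodule.sum_mem _ (fun i hi => (hG i (Finset.mem_range.mp hi)).1.1)
    obtain ⟨z, hz, hzne⟩ := hno _ hcI
    apply hzne
    apply h
    intro j hj
    have hsum : ∑ i ∈ Finset.range n, A i * z = 0 := by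
      rw [← Finset.sum_mul]; exact hz
    exact peel n (Finset.range n) (Finset.card_range n) A (fun _ => z)
      (fun j' hj' i' hi' hlt => (hG i' (Finset.mem_range.mp hi')).2 j' hlt)
      (fun i' hi' => (hG i' (Finset.mem_range.mp hi')).1.2.2)
      hsum j (Finset.mem_range.mpr hj)
  -- Step B : every good sequence can be extended
  have hext : ∀ (A : ℕ → R) (n : ℕ), GoodSeq I A n →
      ∃ a : R, (a ∈ I ∧ a ≠ 0 ∧ ∀ z : R, a * (a * z) = 0 → a * z = 0)
        ∧ ∀ j, j < n → A j * a = 0 := by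
    intro A n hG
    obtain ⟨x, hxann, hxne⟩ := hDne A n hG
    obtain ⟨r, hyI, hyne⟩ := hess x hxne
    have hyann : ∀ j, j < n → A j * (x * r) = 0 := fun j hj => by
      rw [← mul_assoc, hxann j hj, zero_mul]
    let J : Submodule Rᵐᵒᵖ R :=
      { carrier := {z | z ∈ I ∧ ∀ j, j < n → A j * z = 0}
        add_mem' := fun hz hw => ⟨I.add_mem hz.1 hw.1,
          fun j hj => by rw [mul_add, hz.2 j hj, hw.2 j hj, add_zero]⟩
        zero_mem' := ⟨I.zero_mem, fun j hj => mul_zero _⟩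
        smul_mem' := fun c z hz => ⟨I.smul_mem c hz.1, fun j hj => by
          rw [MulOpposite.smul_eq_mul_unop, ← mul_assoc, hz.2 j hj, zero_mul]⟩ }
    have hyJ : x * r ∈ J := ⟨hyI, hyann⟩
    obtain ⟨x₀, hx₀J, hx₀pow⟩ := exists_nonnilpotent hsp hacc J (x * r) hyJ hyne
    obtain ⟨N, hN1, hNf⟩ := fitting hacc x₀
    refine ⟨x₀ ^ N, ⟨?_, ?_, ?_⟩, ?_⟩
    · -- x₀ ^ N ∈ I
      have h1 : x₀ ^ N ∈ J := by
        have h2 := J.smul_mem (MulOpposite.op (x₀ ^ (N - 1))) hx₀J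
        rw [MulOpposite.smul_eq_mul_unop, MulOpposite.unop_op, ← pow_succ'] at h2
        rwa [show N - 1 + 1 = N by omega] at h2
      exact h1.1
    · have := hx₀pow (N - 1)
      rwa [show N - 1 + 1 = N by omega] at this
    · intro z hz
      apply hNf
      rw [two_mul, pow_add, mul_assoc]
      exact hz
    · intro j hj
      have h1 : x₀ ^ N ∈ J := by
        have h2 := J.smul_mem (MulOpposite.op (x₀ ^ (N - 1))) hx₀J
        rw [MulOpposite.smul_eq_mul_unop, MulOpposite.unop_op, ← pow_succ'] at h2
        rwa [show N - 1 + 1 = N by omega] at h2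
      exact h1.2 j hj
  -- Step C : build an infinite good sequence
  choose ext hext1 hext2 using hext
  have good0 : ∀ A : ℕ → R, GoodSeq I A 0 := fun A i hi => absurd hi (Nat.not_lt_zero i)
  let g : (n : ℕ) → {p : ℕ → R // GoodSeq I p n} := fun n => Nat.rec
    ⟨fun _ => 0, good0 _⟩
    (fun m p => ⟨Function.update p.1 m (ext p.1 m p.2),
      goodSeq_update p.2 (hext1 p.1 m p.2).1 (hext1 p.1 m p.2).2.1 (hext1 p.1 m p.2).2.2
        (hext2 p.1 m p.2)⟩) n
  have hgsucc : ∀ n, (g (n+1)).1 = Function.update (g n).1 n (ext (g n).1 n (g n).2) :=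
    fun n => rfl
  have hagree : ∀ n m, m < n → (g n).1 m = (g (m+1)).1 m := by
    intro n
    induction n with
    | zero => intro m hm; omega
    | succ n ih =>
      intro m hm
      rcases Nat.lt_succ_iff_lt_or_eq.mp hm with h | h
      · rw [hgsucc n, Function.update_of_ne (by omega : m ≠ n)]
        exact ih m h
      · subst h; rfl
  set B : ℕ → R := fun m => (g (m+1)).1 m with hB
  have hprop : ∀ m, B m ∈ I ∧ B m ≠ 0 ∧ ∀ z : R, B m * (B m * z) = 0 → B m * z = 0 :=
    fun m => ((g (m+1)).2 m (Nat.lt_succ_self m)).1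
  have hpairs : ∀ j i, j < i → B j * B i = 0 := by
    intro j i hji
    have h1 := ((g (i+1)).2 i (Nat.lt_succ_self i)).2 j hji
    rwa [hagree (i+1) j (by omega)] at h1
  -- contradiction with finite uniform dimension
  apply hdim
  refine ⟨fun m => Submodule.span Rᵐᵒᵖ {B m}, fun m => ?_, ?_⟩
  · rw [Ne, Submodule.span_singleton_eq_bot]
    exact (hprop m).2.1
  · intro i
    rw [Submodule.disjoint_def]
    intro x hxi hxsup
    obtain ⟨ci, hci⟩ := Submodule.mem_span_singleton.mp hxi
    rw [Submodule.mem_iSup_iff_exists_finsupp] at hxsup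
    obtain ⟨F, hF, hFsum⟩ := hxsup
    have hFi : F i = 0 := by
      have h1 := hF i
      rw [iSup_neg (not_not_intro rfl)] at h1
      exact (Submodule.mem_bot _).mp h1
    have hins : i ∉ F.support := Finsupp.notMem_support_iff.mpr hFi
    have hcomp : ∀ j : ℕ, ∃ c : Rᵐᵒᵖ, (j ≠ i → c • B j = F j) := by
      intro j
      by_cases hji : j = i
      · exact ⟨0, fun h => absurd hji h⟩
      · have hj2 := hF j
        rw [iSup_pos hji] at hj2
        obtain ⟨c, hc⟩ := Submodule.mem_span_singleton.mp hj2
        exact ⟨c, fun _ => hc⟩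
    choose cj hcj using hcomp
    set cc : ℕ → R := fun j => if j = i then MulOpposite.unop ci
      else - MulOpposite.unop (cj j) with hcc
    have hcci : cc i = MulOpposite.unop ci := by rw [hcc]; simp
    have h1 : B i * cc i = x := by
      rw [hcci, ← MulOpposite.smul_eq_mul_unop, hci]
    have hsum0 : ∑ j ∈ insert i F.support, B j * cc j = 0 := by
      rw [Finset.sum_insert hins]
      have h2 : ∀ j ∈ F.support, B j * cc j = - F j := by
        intro j hj
        have hji : j ≠ i := fun h => hins (h ▸ hj)
        have : cc j = - MulOpposite.unop (cj j) := by rw [hcc]; simp [hji]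
        rw [this, mul_neg, ← MulOpposite.smul_eq_mul_unop, hcj j hji]
      rw [Finset.sum_congr rfl h2, h1, Finset.sum_neg_distrib]
      have h3 : ∑ j ∈ F.support, F j = x := hFsum
      rw [h3]
      exact add_neg_cancel x
    have hfin := peel (insert i F.support).card (insert i F.support) rfl B cc
      (fun j' hj' i' hi' hlt => hpairs j' i' hlt)
      (fun i' hi' => (hprop i').2.2)
      hsum0 i (Finset.mem_insert_self i F.support)
    rw [h1] at hfin
    exact hfin

end Construction

/-- Let `R` be a semiprime right Goldie subring of a semisimple Artinian ring `S`, and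
`𝒢` a set of right ideals of `R` with (a) zero left annihilator in `S` and
(b) for each `x ∈ S` some `I ∈ 𝒢` with `xI ⊆ R`. Then `S` is a classical right quotient
ring of `R` and each `I ∈ 𝒢` contains a regular element of `R`. -/
theorem classical_right_quotient_of_goldie_in_semisimple
    {R S : Type*} [Ring R] [Ring S] (f : R →+* S) (hinj : Function.Injective f)
    (hsp : IsSemiprimeRing R) (hgoldie : IsRightGoldieRing R)
    (hS : IsSemisimpleRing S)
    (G : Set (Submodule Rᵐᵒᵖ R))
    (ha : ∀ I ∈ G, ∀ x : S, (∀ a ∈ I, x * f a = 0) → x = 0)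
    (hb : ∀ x : S, ∃ I ∈ G, ∀ a ∈ I, ∃ r : R, x * f a = f r) :
    IsClassicalRightQuotientRing R S f ∧ ∀ I ∈ G, ∃ s ∈ I, IsRegular s := by
  classical
  obtain ⟨hdim, hacc⟩ := hgoldie
  have hf0 : ∀ r : R, f r = 0 → r = 0 := fun r h => hinj (by rw [h, map_zero])
  -- (1) each I ∈ G generates S as a right ideal
  have oneSum : ∀ I ∈ G, ∃ (n : ℕ) (a : Fin n → R) (x : Fin n → S),
      (∀ i, a i ∈ I) ∧ ∑ i, f (a i) * x i = 1 := by
    intro I hI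
    have h1 : (1 : S) ∈ Submodule.span Sᵐᵒᵖ (f '' (I : Set R)) := by
      apply one_mem_span_of_lann
      intro x hx
      exact ha I hI x (fun a haI => hx (f a) ⟨a, haI, rfl⟩)
    rw [Submodule.mem_span_set'] at h1
    obtain ⟨n, cf, gf, hrep⟩ := h1
    have hgf : ∀ i, ∃ a : R, a ∈ I ∧ f a = (gf i : S) := fun i => (gf i).2
    choose af haf1 haf2 using hgf
    refine ⟨n, af, fun i => (cf i).unop, haf1, ?_⟩
    calc ∑ i, f (af i) * (cf i).unop = ∑ i, cf i • (gf i : S) := by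
          apply Finset.sum_congr rfl
          intro i _
          rw [MulOpposite.smul_eq_mul_unop, haf2 i]
      _ = 1 := hrep
  -- (2) nonzero multiples inside members of G
  have hmulJ : ∀ t : R, t ≠ 0 → ∀ J ∈ G, ∃ j ∈ J, t * j ≠ 0 := by
    intro t ht J hJ
    by_contra hc
    push_neg at hc
    apply ht
    apply hf0
    apply ha J hJ
    intro a haJ
    rw [← map_mul, hc a haJ, map_zero]
  -- (3) each I ∈ G is essential
  have ess : ∀ I ∈ G, ∀ t : R, t ≠ 0 → ∃ r : R, t * r ∈ I ∧ t * r ≠ 0 := by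
    intro I hI t ht
    obtain ⟨n, a, x, haI, hsum⟩ := oneSum I hI
    have main : ∀ m : ℕ, m ≤ n → ∃ u r : R, u = t * r ∧ u ≠ 0 ∧
        ∀ i : Fin n, (i : ℕ) < m → ∃ w, x i * f u = f w := by
      intro m
      induction m with
      | zero => exact fun _ => ⟨t, 1, (mul_one t).symm, ht,
          fun i h => absurd h (Nat.not_lt_zero _)⟩
      | succ m ih =>
        intro hm
        obtain ⟨u, r, hur, hu, hden⟩ := ih (Nat.le_of_succ_le hm)
        have hmn : m < n := hm
        obtain ⟨J, hJ, hJd⟩ := hb (x ⟨m, hmn⟩ * f u)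
        obtain ⟨j, hjJ, huj⟩ := hmulJ u hu J hJ
        refine ⟨u * j, r * j, by rw [hur, mul_assoc], huj, ?_⟩
        intro i hi
        rcases Nat.lt_succ_iff_lt_or_eq.mp hi with h | h
        · obtain ⟨w, hw⟩ := hden i h
          exact ⟨w * j, by rw [map_mul, ← mul_assoc, hw, map_mul]⟩
        · obtain ⟨w, hw⟩ := hJd j hjJ
          have hieq : i = ⟨m, hmn⟩ := Fin.ext h
          rw [hieq]
          exact ⟨w, by rw [map_mul, ← mul_assoc]; exact hw⟩
    obtain ⟨u, r, hur, hu, hden⟩ := main n le_rfl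
    choose w hw using fun i : Fin n => hden i i.isLt
    have hfu : f u = f (∑ i, a i * w i) := by
      calc f u = 1 * f u := (one_mul _).symm
        _ = (∑ i, f (a i) * x i) * f u := by rw [hsum]
        _ = ∑ i, f (a i) * x i * f u := by rw [Finset.sum_mul]
        _ = ∑ i, f (a i) * f (w i) := by
            apply Finset.sum_congr rfl
            intro i _
            rw [mul_assoc, hw i]
        _ = f (∑ i, a i * w i) := by
            rw [map_sum]
            apply Finset.sum_congr rfl
            intro i _
            rw [map_mul]
    have hu_eq : u = ∑ i, a i * w i := hinj hfu
    have huI : u ∈ I := by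
      rw [hu_eq]
      apply Submodule.sum_mem
      intro i _
      have := I.smul_mem (MulOpposite.op (w i)) (haI i)
      rwa [MulOpposite.smul_eq_mul_unop, MulOpposite.unop_op] at this
    exact ⟨r, by rw [← hur]; exact huI, by rw [← hur]; exact hu⟩
  -- (4) each I ∈ G contains an element with zero right annihilator
  have key : ∀ I ∈ G, ∃ c ∈ I, ∀ z : R, c * z = 0 → z = 0 :=
    fun I hI => exists_right_regular_of_essential hsp hacc hdim I (ess I hI)
  -- (5) right-annihilator-free elements are regular
  have regOf : ∀ c : R, (∀ z : R, c * z = 0 → z = 0) → IsRegular c := by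
    intro c hc
    have hrS : ∀ z : S, f c * z = 0 → z = 0 := by
      intro z hz
      obtain ⟨J, hJ, hJd⟩ := hb z
      apply ha J hJ
      intro a haJ
      obtain ⟨r, hr⟩ := hJd a haJ
      have h1 : f (c * r) = 0 := by
        rw [map_mul, ← hr, ← mul_assoc, hz, zero_mul]
      have h2 : r = 0 := hc r (hf0 _ h1)
      rw [hr, h2, map_zero]
    have hunit : IsUnit (f c) := isUnit_of_rann_eq_bot (f c) hrS
    constructor
    · intro z1 z2 h12
      have h12' : c * z1 = c * z2 := h12
      have h3 : c * (z1 - z2) = 0 := by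
        rw [mul_sub, h12', sub_self]
      exact sub_eq_zero.mp (hc _ h3)
    · intro z1 z2 h12
      have h3 : f z1 * f c = f z2 * f c := by
        rw [← map_mul, ← map_mul]
        exact congrArg f h12
      exact hinj (hunit.mul_right_cancel h3)
  have main2 : ∀ I ∈ G, ∃ s ∈ I, IsRegular s := by
    intro I hI
    obtain ⟨c, hcI, hc⟩ := key I hI
    exact ⟨c, hcI, regOf c hc⟩
  refine ⟨⟨hinj, ?_, ?_⟩, main2⟩
  · intro s hs
    apply isUnit_of_rann_eq_bot
    intro z hz
    obtain ⟨J, hJ, hJd⟩ := hb z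
    apply ha J hJ
    intro a haJ
    obtain ⟨r, hr⟩ := hJd a haJ
    have h1 : f (s * r) = 0 := by
      rw [map_mul, ← hr, ← mul_assoc, hz, zero_mul]
    have h2 : s * r = 0 := hf0 _ h1
    have h3 : r = 0 := hs.left (show s * r = s * 0 by rw [h2, mul_zero])
    rw [hr, h3, map_zero]
  · intro q
    obtain ⟨J, hJ, hJd⟩ := hb q
    obtain ⟨s, hsJ, hs⟩ := main2 J hJ
    obtain ⟨a, haq⟩ := hJd s hsJ
    exact ⟨a, s, hs, haq⟩
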